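/- arXiv:1612.08318 — 4 statements merged into one kernel-verified Lean document; each statement's English description precedes it below -/
import Mathlib

section
/- Let r, s ≥ 1, let α₁, …, α_r and t₁, …, t_r, u₁, …, u_s be real numbers, and let β_j = a_j + i·b_j (j = 1, …, s) be complex numbers with a_j, b_j ∈ ℝ. Set T(x,z) = Σ_{i=1}^r t_i²(x − α_i z)² and S(x,z) = Σ_{j=1}^s 2u_j²(x − β_j z)(x − conj(β_j) z), and let Q = T + S. Then the discriminant of Q satisfies Δ(Q) = Δ(T) + Δ(S) − 8 · Σ_{i=1}^r Σ_{j=1}^s t_i² u_j² ( (α_i − a_j)² + b_j² ). -/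
/-!
Comparing coefficients (evaluate at `(1,0)`, `(0,1)`, `(1,1)`) shows that the coefficients of `T`
and `S` are weighted moment sums, and that those of `Q` are their sums. The discriminant is a
quadratic form in the coefficients, so `Δ(T + S) = Δ(T) + Δ(S) + 2 ⟨T, S⟩` with its polar form
`⟨·,·⟩`; by bilinearity the cross term splits over the pairs `(i, j)`, and the pair
`t²(x - αz)²`, `2u²|x - βz|²` contributes `-4 t² u² |α - β|²`.
-/

open Complex

theorem coeffs_eq_of_forall_binary_quadratic_eq {R : Type*} [CommRing R] {A B C A' B' C' : R}
    (h : ∀ x z : R, A * x ^ 2 + B * x * z + C * z ^ 2 = A' * x ^ 2 + B' * x * z + C' * z ^ 2) :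
    A = A' ∧ B = B' ∧ C = C' := by
  have h₁ := h 1 0
  have h₂ := h 0 1
  have h₃ := h 1 1
  simp only [one_pow, ne_eq, OfNat.ofNat_ne_zero, not_false_eq_true, zero_pow, mul_one, mul_zero,
    add_zero, zero_add] at h₁ h₂ h₃
  exact ⟨h₁, by linear_combination h₃ - h₁ - h₂, h₂⟩

theorem discrim_add {R : Type*} [CommRing R] (A B C A' B' C' : R) :
    discrim (A + A') (B + B') (C + C') =
      discrim A B C + discrim A' B' C' + 2 * (B * B' - 2 * A * C' - 2 * A' * C) := by
  simp only [discrim]; ring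

theorem sum_mul_sub_mul_sq {ι R : Type*} [CommRing R] (s : Finset ι) (c α : ι → R) (x z : R) :
    ∑ i ∈ s, c i * (x - α i * z) ^ 2 =
      (∑ i ∈ s, c i) * x ^ 2 + (-2 * ∑ i ∈ s, c i * α i) * x * z
        + (∑ i ∈ s, c i * α i ^ 2) * z ^ 2 := by
  simp only [Finset.sum_mul, Finset.mul_sum, ← Finset.sum_add_distrib]
  exact Finset.sum_congr rfl fun i _ => by ring

theorem sub_mul_mul_sub_conj_mul (x z a b : ℝ) :
    ((x : ℂ) - (a + b * I) * z) * ((x : ℂ) - starRingEnd ℂ (a + b * I) * z) =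
      (((x - a * z) ^ 2 + (b * z) ^ 2 : ℝ) : ℂ) := by
  apply Complex.ext <;> simp [sq]; ring

theorem sum_mul_sub_mul_sq_add_mul_sq {ι R : Type*} [CommRing R] (s : Finset ι) (c a b : ι → R)
    (x z : R) :
    ∑ i ∈ s, c i * ((x - a i * z) ^ 2 + (b i * z) ^ 2) =
      (∑ i ∈ s, c i) * x ^ 2 + (-2 * ∑ i ∈ s, c i * a i) * x * z
        + (∑ i ∈ s, c i * (a i ^ 2 + b i ^ 2)) * z ^ 2 := by
  simp only [Finset.sum_mul, Finset.mul_sum, ← Finset.sum_add_distrib]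
  exact Finset.sum_congr rfl fun i _ => by ring

theorem sum_sum_mul_mul_sub_sq_add_sq {ι κ R : Type*} [CommRing R] (s : Finset ι) (s' : Finset κ)
    (c α : ι → R) (d a b : κ → R) :
    ∑ i ∈ s, ∑ j ∈ s', c i * d j * ((α i - a j) ^ 2 + b j ^ 2) =
      (∑ i ∈ s, c i * α i ^ 2) * (∑ j ∈ s', d j) - 2 * (∑ i ∈ s, c i * α i) * (∑ j ∈ s', d j * a j)
        + (∑ i ∈ s, c i) * (∑ j ∈ s', d j * (a j ^ 2 + b j ^ 2)) := by
  rw [mul_assoc 2, Finset.sum_mul_sum, Finset.sum_mul_sum, Finset.sum_mul_sum]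
  simp only [Finset.mul_sum, ← Finset.sum_sub_distrib, ← Finset.sum_add_distrib]
  exact Finset.sum_congr rfl fun i _ => Finset.sum_congr rfl fun j _ => by ring

theorem stmt2_general (r s : ℕ)
    (α t : Fin r → ℝ) (a b u : Fin s → ℝ)
    (AT BT CT AS BS CS AQ BQ CQ : ℝ)
    (hT : ∀ x z : ℝ,
      ∑ i : Fin r, t i ^ 2 * (x - α i * z) ^ 2 = AT * x ^ 2 + BT * x * z + CT * z ^ 2)
    (hS : ∀ x z : ℝ,
      ∑ j : Fin s, 2 * (u j : ℂ) ^ 2 * ((x : ℂ) - ((a j : ℂ) + (b j : ℂ) * Complex.I) * (z : ℂ))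
          * ((x : ℂ) - (starRingEnd ℂ) ((a j : ℂ) + (b j : ℂ) * Complex.I) * (z : ℂ))
        = (AS : ℂ) * (x : ℂ) ^ 2 + (BS : ℂ) * (x : ℂ) * (z : ℂ) + (CS : ℂ) * (z : ℂ) ^ 2)
    (hQ : ∀ x z : ℝ,
      (∑ i : Fin r, (t i : ℂ) ^ 2 * ((x : ℂ) - (α i : ℂ) * (z : ℂ)) ^ 2)
        + ∑ j : Fin s, 2 * (u j : ℂ) ^ 2
            * ((x : ℂ) - ((a j : ℂ) + (b j : ℂ) * Complex.I) * (z : ℂ))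
            * ((x : ℂ) - (starRingEnd ℂ) ((a j : ℂ) + (b j : ℂ) * Complex.I) * (z : ℂ))
        = (AQ : ℂ) * (x : ℂ) ^ 2 + (BQ : ℂ) * (x : ℂ) * (z : ℂ) + (CQ : ℂ) * (z : ℂ) ^ 2) :
    BQ ^ 2 - 4 * AQ * CQ =
      (BT ^ 2 - 4 * AT * CT) + (BS ^ 2 - 4 * AS * CS)
        - 8 * ∑ i : Fin r, ∑ j : Fin s, t i ^ 2 * u j ^ 2 * ((α i - a j) ^ 2 + b j ^ 2) := by
  have hS_term (j : Fin s) (x z : ℝ) :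
      2 * (u j : ℂ) ^ 2 * ((x : ℂ) - (a j + b j * I) * z) * ((x : ℂ) - starRingEnd ℂ (a j + b j * I) * z)
        = ((2 * u j ^ 2 * ((x - a j * z) ^ 2 + (b j * z) ^ 2) : ℝ) : ℂ) := by
    rw [mul_assoc, sub_mul_mul_sub_conj_mul]; push_cast; ring
  have hS_real (x z : ℝ) : ∑ j, 2 * u j ^ 2 * ((x - a j * z) ^ 2 + (b j * z) ^ 2) =
      AS * x ^ 2 + BS * x * z + CS * z ^ 2 := by
    have := hS x z
    simp only [hS_term] at this
    exact_mod_cast this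
  have hQ_real (x z : ℝ) : ∑ i, t i ^ 2 * (x - α i * z) ^ 2 +
      ∑ j, 2 * u j ^ 2 * ((x - a j * z) ^ 2 + (b j * z) ^ 2) =
      AQ * x ^ 2 + BQ * x * z + CQ * z ^ 2 := by
    have := hQ x z
    simp only [hS_term] at this
    exact_mod_cast this
  obtain ⟨rfl, rfl, rfl⟩ : AQ = AT + AS ∧ BQ = BT + BS ∧ CQ = CT + CS :=
    coeffs_eq_of_forall_binary_quadratic_eq fun x z => by rw [← hQ_real, hT, hS_real]; ring
  change discrim _ _ _ = discrim AT BT CT + discrim AS BS CS - _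
  rw [discrim_add, sub_eq_add_neg _ (8 * _), add_right_inj]
  obtain ⟨rfl, rfl, rfl⟩ := coeffs_eq_of_forall_binary_quadratic_eq fun x z =>
    (sum_mul_sub_mul_sq _ _ _ x z).symm.trans (hT x z)
  obtain ⟨rfl, rfl, rfl⟩ := coeffs_eq_of_forall_binary_quadratic_eq fun x z =>
    (sum_mul_sub_mul_sq_add_mul_sq _ _ _ _ x z).symm.trans (hS_real x z)
  simp only [sum_sum_mul_mul_sub_sq_add_sq, mul_assoc (2 : ℝ), ← Finset.mul_sum]
  ring

/-- With `T(x,z) = Σ_i t_i²(x - α_i z)²` and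
`S(x,z) = Σ_j 2u_j²(x - β_j z)(x - conj β_j z)` (where `β_j = a_j + i b_j`), and `Q = T + S`,
the discriminants satisfy
`Δ(Q) = Δ(T) + Δ(S) - 8 Σ_i Σ_j t_i² u_j² ((α_i - a_j)² + b_j²)`. -/
theorem stmt2 (r s : ℕ) (hr : 1 ≤ r) (hs : 1 ≤ s)
    (α t : Fin r → ℝ) (a b u : Fin s → ℝ)
    (AT BT CT AS BS CS AQ BQ CQ : ℝ)
    (hT : ∀ x z : ℝ,
      ∑ i : Fin r, t i ^ 2 * (x - α i * z) ^ 2 = AT * x ^ 2 + BT * x * z + CT * z ^ 2)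
    (hS : ∀ x z : ℝ,
      ∑ j : Fin s, 2 * (u j : ℂ) ^ 2 * ((x : ℂ) - ((a j : ℂ) + (b j : ℂ) * Complex.I) * (z : ℂ))
          * ((x : ℂ) - (starRingEnd ℂ) ((a j : ℂ) + (b j : ℂ) * Complex.I) * (z : ℂ))
        = (AS : ℂ) * (x : ℂ) ^ 2 + (BS : ℂ) * (x : ℂ) * (z : ℂ) + (CS : ℂ) * (z : ℂ) ^ 2)
    (hQ : ∀ x z : ℝ,
      (∑ i : Fin r, (t i : ℂ) ^ 2 * ((x : ℂ) - (α i : ℂ) * (z : ℂ)) ^ 2)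
        + ∑ j : Fin s, 2 * (u j : ℂ) ^ 2
            * ((x : ℂ) - ((a j : ℂ) + (b j : ℂ) * Complex.I) * (z : ℂ))
            * ((x : ℂ) - (starRingEnd ℂ) ((a j : ℂ) + (b j : ℂ) * Complex.I) * (z : ℂ))
        = (AQ : ℂ) * (x : ℂ) ^ 2 + (BQ : ℂ) * (x : ℂ) * (z : ℂ) + (CQ : ℂ) * (z : ℂ) ^ 2) :
    BQ ^ 2 - 4 * AQ * CQ =
      (BT ^ 2 - 4 * AT * CT) + (BS ^ 2 - 4 * AS * CS)
        - 8 * ∑ i : Fin r, ∑ j : Fin s, t i ^ 2 * u j ^ 2 * ((α i - a j) ^ 2 + b j ^ 2) :=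
  stmt2_general r s α t a b u AT BT CT AS BS CS AQ BQ CQ hT hS hQ
end

section
/- Fix an integer n ≥ 3, let R = ℚ[a₀, …, aₙ], and let f = Σ_{i=0}^n a_i x^{n−i} z^i ∈ R[x,z] be the generic binary form of degree n, with G_f = F_f/(n·f) its associated covariant, written G_f = Σ_{i=0}^d g_i x^{d−i} z^i where d = (n−1)(n−2) and g_i ∈ R. Let σ be the ℚ-algebra automorphism of R determined by σ(a_i) = a_{n−i} for all i (so that applying σ to the coefficients of f gives f^σ(x,z) = f(z,x)). Then G_{f^σ}(x,z) = (−1)^{n−1} · G_f(z,x); equivalently, σ(g_i) = (−1)^{n−1} · g_{d−i} for all i = 0, …, d. -/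
/-!
Write `s` for the swap of `x` and `z`. For a form `f` of degree `m`, the partials of `f ∘ s`
are the swapped partials of `f`, so the pair `(-∂_z(f ∘ s), ∂_x(f ∘ s))` at which `F_{f ∘ s}`
evaluates them is, after exchanging its coordinates, the negative of the swapped pair
`(-f_z, f_x) ∘ s`. As `f_x, f_z` are homogeneous of degree `m - 1`, this gives
`F_{f ∘ s} = (-1)^(m-1) · F_f ∘ s`. For the generic form, applying `σ` to the coefficients is
the same as swapping the variables, while `F` commutes with any change of coefficients. Hence
`n f^σ G_{f^σ} = F_{f^σ}` equals both `(-1)^(n-1) (n f G_f) ∘ s` and `σ(n f G_f)`, and cancelling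
`n f^σ ≠ 0` gives `G_{f^σ} = (-1)^(n-1) G_f ∘ s = σ(G_f)`.
-/

open MvPolynomial

/-- The associated form `F_f(x,z) = x·f_x(-f_z, f_x) + z·f_z(-f_z, f_x)` of a binary form
`f(x,z)` (variable `0` is `x`, variable `1` is `z`). -/
noncomputable def Fcov {R : Type*} [CommRing R] (f : MvPolynomial (Fin 2) R) :
    MvPolynomial (Fin 2) R :=
  X 0 * bind₁ ![-(pderiv 1 f), pderiv 0 f] (pderiv 0 f)
    + X 1 * bind₁ ![-(pderiv 1 f), pderiv 0 f] (pderiv 1 f)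

namespace MvPolynomial

lemma IsHomogeneous.aeval_smul {R S σ : Type*} [CommSemiring R] [CommSemiring S] [Algebra R S]
    {φ : MvPolynomial σ R} {m : ℕ} (hφ : φ.IsHomogeneous m) (c : S) (x : σ → S) :
    MvPolynomial.aeval (c • x) φ = c ^ m * MvPolynomial.aeval x φ := by
  conv_lhs => rw [φ.as_sum]
  conv_rhs => rw [φ.as_sum]
  simp only [map_sum, Finset.mul_sum]
  refine Finset.sum_congr rfl fun d hd => ?_
  rw [aeval_monomial, aeval_monomial, hφ.degree_eq_sum_deg_support hd]
  simp only [Pi.smul_apply, smul_eq_mul, mul_pow, Finsupp.prod, Finset.prod_mul_distrib,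
    Finset.prod_pow_eq_pow_sum]
  ring

lemma IsHomogeneous.bind₁_neg {R σ τ : Type*} [CommRing R] {φ : MvPolynomial σ R} {m : ℕ}
    (hφ : φ.IsHomogeneous m) (w : σ → MvPolynomial τ R) :
    bind₁ (-w) φ = (-1) ^ m * bind₁ w φ := by
  rw [← neg_one_smul (MvPolynomial τ R) w]
  exact hφ.aeval_smul _ _

lemma coeff_rename_swap {R : Type*} [CommSemiring R] (p : MvPolynomial (Fin 2) R) (a b : ℕ) :
    (rename ![(1 : Fin 2), 0] p).coeff (Finsupp.single 0 a + Finsupp.single 1 b)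
      = p.coeff (Finsupp.single 0 b + Finsupp.single 1 a) := by
  have hswap : Function.Injective ![(1 : Fin 2), 0] := by decide
  have hd : Finsupp.single 0 a + Finsupp.single 1 b
      = (Finsupp.single (0 : Fin 2) b + Finsupp.single 1 a).mapDomain ![(1 : Fin 2), 0] := by
    simp [Finsupp.mapDomain_add, add_comm]
  rw [hd, coeff_rename_mapDomain _ hswap]

end MvPolynomial

section Fcov

variable {R : Type*} [CommRing R]

lemma Fcov_map {S : Type*} [CommRing S] (φ : R →+* S) (f : MvPolynomial (Fin 2) R) :
    Fcov (map φ f) = map φ (Fcov f) := by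
  have hv : (fun i => map φ ((![-(pderiv 1 f), pderiv 0 f] : Fin 2 → MvPolynomial (Fin 2) R) i))
      = ![-(pderiv 1 (map φ f)), pderiv 0 (map φ f)] := by
    funext j
    fin_cases j <;> simp [pderiv_map]
  simp only [Fcov, map_add, map_mul, map_bind₁, map_X, hv, pderiv_map]

lemma Fcov_rename_swap {f : MvPolynomial (Fin 2) R} {m : ℕ} (hf : f.IsHomogeneous m) :
    Fcov (rename ![(1 : Fin 2), 0] f) = (-1) ^ (m - 1) * rename ![(1 : Fin 2), 0] (Fcov f) := by
  set s : Fin 2 → Fin 2 := ![1, 0]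
  have hs : Function.Injective s := by decide
  set w := fun i => rename s ((![-(pderiv 1 f), pderiv 0 f] : Fin 2 → MvPolynomial (Fin 2) R) i)
  have hx : pderiv 0 (rename s f) = rename s (pderiv 1 f) := pderiv_rename hs 1 f
  have hz : pderiv 1 (rename s f) = rename s (pderiv 0 f) := pderiv_rename hs 0 f
  have hsubst (h : MvPolynomial (Fin 2) R) :
      bind₁ ![-(pderiv 1 (rename s f)), pderiv 0 (rename s f)] (rename s h) = bind₁ (-w) h := by
    have hv : ![-(pderiv 1 (rename s f)), pderiv 0 (rename s f)] ∘ s = -w := by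
      funext j
      fin_cases j <;> simp [s, w, hx, hz]
    rw [bind₁_rename, hv]
  calc Fcov (rename s f) = X 0 * bind₁ (-w) (pderiv 1 f) + X 1 * bind₁ (-w) (pderiv 0 f) := by
        rw [← hsubst, ← hsubst, ← hx, ← hz]; rfl
    _ = (-1) ^ (m - 1) * (X 1 * bind₁ w (pderiv 0 f) + X 0 * bind₁ w (pderiv 1 f)) := by
        rw [hf.pderiv.bind₁_neg, hf.pderiv.bind₁_neg]; ring
    _ = (-1) ^ (m - 1) * rename s (Fcov f) := by
        simp only [Fcov, map_add, map_mul, rename_X, rename_bind₁]; rfl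

end Fcov

section GenericBinaryForm

variable (R : Type*) [CommSemiring R] (n : ℕ)

noncomputable def genericBinaryForm : MvPolynomial (Fin 2) (MvPolynomial (Fin (n + 1)) R) :=
  ∑ i : Fin (n + 1), C (X i) * X 0 ^ (n - (i : ℕ)) * X 1 ^ (i : ℕ)

lemma genericBinaryForm_isHomogeneous : (genericBinaryForm R n).IsHomogeneous n := by
  refine IsHomogeneous.sum _ _ _ fun i _ => ?_
  have h := ((isHomogeneous_C (Fin 2) (X i : MvPolynomial (Fin (n + 1)) R)).mul
    (isHomogeneous_X_pow 0 (n - i))).mul (isHomogeneous_X_pow 1 i)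
  rwa [zero_add, Nat.sub_add_cancel i.is_le] at h

lemma map_rename_rev_genericBinaryForm :
    map (rename Fin.rev).toRingHom (genericBinaryForm R n)
      = rename ![(1 : Fin 2), 0] (genericBinaryForm R n) := by
  simp only [genericBinaryForm, map_sum]
  refine Fintype.sum_equiv Fin.revPerm _ _ fun i => ?_
  have hrev : ((Fin.rev i : Fin (n + 1)) : ℕ) = n - i := by rw [Fin.val_rev]; omega
  simp only [map_mul, map_pow, map_C, map_X, rename_C, rename_X, Fin.revPerm_apply,
    AlgHom.toRingHom_eq_coe, RingHom.coe_coe, hrev, Nat.sub_sub_self i.is_le,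
    Matrix.cons_val_zero, Matrix.cons_val_one]
  ring

lemma genericBinaryForm_ne_zero [Nontrivial R] : genericBinaryForm R n ≠ 0 := by
  intro h
  have h10 := congrArg (eval ![1, 0]) h
  rw [genericBinaryForm, map_sum, Finset.sum_eq_single 0] at h10
  · simp at h10
  · intro i _ hi
    simp [Fin.val_ne_zero_iff.mpr hi]
  · simp

end GenericBinaryForm

theorem stmt7_general (n : ℕ) (hn : 3 ≤ n)
    (f : MvPolynomial (Fin 2) (MvPolynomial (Fin (n + 1)) ℚ))
    (hf : f = ∑ i : Fin (n + 1), C (X i) * X 0 ^ (n - (i : ℕ)) * X 1 ^ (i : ℕ))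
    (G G' : MvPolynomial (Fin 2) (MvPolynomial (Fin (n + 1)) ℚ))
    (hG : Fcov f = (n : MvPolynomial (Fin 2) (MvPolynomial (Fin (n + 1)) ℚ)) * f * G)
    (hG' : Fcov (MvPolynomial.map
          (rename (Fin.rev : Fin (n + 1) → Fin (n + 1))).toRingHom f)
        = (n : MvPolynomial (Fin 2) (MvPolynomial (Fin (n + 1)) ℚ)) *
            MvPolynomial.map (rename (Fin.rev : Fin (n + 1) → Fin (n + 1))).toRingHom f * G') :
    G' = (-1) ^ (n - 1) * rename ![(1 : Fin 2), 0] G ∧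
    ∀ i ≤ (n - 1) * (n - 2),
      rename (Fin.rev : Fin (n + 1) → Fin (n + 1))
          (G.coeff (Finsupp.single 0 ((n - 1) * (n - 2) - i) + Finsupp.single 1 i))
        = (-1) ^ (n - 1) *
            G.coeff (Finsupp.single 0 i + Finsupp.single 1 ((n - 1) * (n - 2) - i)) := by
  replace hf : f = genericBinaryForm ℚ n := hf
  subst hf
  have hσf := map_rename_rev_genericBinaryForm ℚ n
  have hnf : (n : MvPolynomial (Fin 2) (MvPolynomial (Fin (n + 1)) ℚ)) *
      map (rename Fin.rev).toRingHom (genericBinaryForm ℚ n) ≠ 0 := by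
    rw [hσf]
    refine mul_ne_zero (Nat.cast_ne_zero.mpr (by omega)) ?_
    exact (rename_injective _ (by decide)).ne_iff' (map_zero _) |>.mpr
      (genericBinaryForm_ne_zero ℚ n)
  have hG'_eq : G' = (-1) ^ (n - 1) * rename ![(1 : Fin 2), 0] G := by
    refine mul_left_cancel₀ hnf ?_
    rw [← hG', hσf, Fcov_rename_swap (genericBinaryForm_isHomogeneous ℚ n), hG, map_mul,
      map_mul, map_natCast]
    ring
  have hσG : map (rename Fin.rev).toRingHom G = G' := by
    refine mul_left_cancel₀ hnf ?_
    rw [← hG', Fcov_map, hG, map_mul, map_mul, map_natCast]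
  refine ⟨hG'_eq, fun i _ => ?_⟩
  have hsign : (-1 : MvPolynomial (Fin 2) (MvPolynomial (Fin (n + 1)) ℚ)) ^ (n - 1)
      = C ((-1) ^ (n - 1)) := by simp
  rw [← AlgHom.coe_toRingHom, ← coeff_map, ← AlgHom.toRingHom_eq_coe, hσG, hG'_eq, hsign,
    coeff_C_mul, coeff_rename_swap]

/-- Let `f = Σ a_i x^{n-i} z^i` be the generic binary form of degree `n ≥ 3`
over `R = ℚ[a₀,…,aₙ]` and `σ` the ℚ-algebra automorphism of `R` with `σ(a_i) = a_{n-i}`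
(realized as `rename Fin.rev`).  If `G = G_f` (i.e. `F_f = n·f·G`) and `G' = G_{f^σ}`
(i.e. `F_{f^σ} = n·f^σ·G'`, where `f^σ` is `f` with `σ` applied to its coefficients), then
`G_{f^σ}(x,z) = (-1)^{n-1}·G_f(z,x)`; equivalently, with `d = (n-1)(n-2)` and
`g_i` the coefficient of `x^{d-i} z^i` in `G_f`, one has `σ(g_i) = (-1)^{n-1} g_{d-i}`. -/
theorem stmt7 (n : ℕ) (hn : 3 ≤ n)
    (f : MvPolynomial (Fin 2) (MvPolynomial (Fin (n + 1)) ℚ))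
    (hf : f = ∑ i : Fin (n + 1), C (X i) * X 0 ^ (n - (i : ℕ)) * X 1 ^ (i : ℕ))
    (G G' : MvPolynomial (Fin 2) (MvPolynomial (Fin (n + 1)) ℚ))
    (hG : Fcov f = (n : MvPolynomial (Fin 2) (MvPolynomial (Fin (n + 1)) ℚ)) * f * G)
    (hGhom : G.IsHomogeneous ((n - 1) * (n - 2)))
    (hG' : Fcov (MvPolynomial.map
          (rename (Fin.rev : Fin (n + 1) → Fin (n + 1))).toRingHom f)
        = (n : MvPolynomial (Fin 2) (MvPolynomial (Fin (n + 1)) ℚ)) *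
            MvPolynomial.map (rename (Fin.rev : Fin (n + 1) → Fin (n + 1))).toRingHom f * G') :
    G' = (-1) ^ (n - 1) * rename ![(1 : Fin 2), 0] G ∧
    ∀ i ≤ (n - 1) * (n - 2),
      rename (Fin.rev : Fin (n + 1) → Fin (n + 1))
          (G.coeff (Finsupp.single 0 ((n - 1) * (n - 2) - i) + Finsupp.single 1 i))
        = (-1) ^ (n - 1) *
            G.coeff (Finsupp.single 0 i + Finsupp.single 1 ((n - 1) * (n - 2) - i)) :=
  stmt7_general n hn f hf G G' hG hG'
end

section
/- Let f(x,z) ∈ ℤ[x,z] be a binary sextic (homogeneous of degree 6) whose coefficient of x⁶ is nonzero, with discriminant Δ(f) ≠ 0, and suppose that for every prime number p the p-adic valuation satisfies v_p(Δ(f)) < 30. Then for every M = [[a,b],[c,d]] ∈ GL₂(ℚ) such that f^M(x,z) := f(ax + bz, cx + dz) has integer coefficients and nonzero x⁶-coefficient, one has |Δ(f^M)| ≥ |Δ(f)|. -/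
/-!
Substituting `M = [[a, b], [c, d]]` sends the roots `αᵢ` of `f` to `(d αᵢ - b) / (a - c αᵢ)`
and multiplies the leading coefficient by `∏ (a - c αᵢ)`, so `Δ(f^M) = (det M)^30 Δ(f)`.
If `p` divided the denominator of `det M`, integrality of `Δ(f^M)` would force `p^30 ∣ Δ(f)`;
hence `det M` is a nonzero integer and `|Δ(f^M)| ≥ |Δ(f)|`.
-/

open MvPolynomial Finset

theorem Fin.prod_prod_Ioi_mul {M : Type*} [CommMonoid M] {n : ℕ} (w : Fin n → M) :
    ∏ i, ∏ j ∈ Ioi i, (w i * w j) = (∏ i, w i) ^ (n - 1) := by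
  have hswap : ∏ i, ∏ j ∈ Ioi i, w j = ∏ j, ∏ _i ∈ Iio j, w j :=
    prod_comm' fun i j => by simp [and_comm]
  simp_rw [Finset.prod_mul_distrib, hswap, ← Finset.prod_mul_distrib, Finset.prod_const,
    ← pow_add, Fin.card_Ioi, Fin.card_Iio, ← Finset.prod_pow]
  exact prod_congr rfl fun i _ => by congr 1; omega

theorem Fin.prod_prod_Ioi_pow_two {M : Type*} [CommMonoid M] {n : ℕ} (k : M) :
    ∏ i : Fin n, ∏ _j ∈ Ioi i, k ^ 2 = k ^ (n * (n - 1)) := by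
  simp_rw [Finset.prod_const, Fin.card_Ioi, ← pow_mul, Finset.prod_pow_eq_pow_sum]
  rw [← Finset.mul_sum, Fin.sum_univ_eq_sum_range (fun i => n - 1 - i),
    sum_range_reflect (fun i => i) n, mul_comm, sum_range_id_mul_two]

section Discriminant

variable {R : Type*} [CommRing R] {n : ℕ}

def discrOfRoots (c : R) (α : Fin n → R) : R :=
  c ^ (2 * n - 2) * ∏ i, ∏ j ∈ Ioi i, (α i - α j) ^ 2

theorem prod_prod_Ioi_sub_sq_eq_det (α : Fin n → R) :
    ∏ i, ∏ j ∈ Ioi i, (α i - α j) ^ 2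
      = ((Matrix.vandermonde α).transpose * Matrix.vandermonde α).det := by
  rw [Matrix.det_mul, Matrix.det_transpose, ← sq, Matrix.det_vandermonde, ← Finset.prod_pow]
  refine prod_congr rfl fun i _ => ?_
  rw [← Finset.prod_pow]
  exact prod_congr rfl fun j _ => by ring

theorem discrOfRoots_congr_roots (c : R) {α β : Fin n → R}
    (h : univ.val.map α = univ.val.map β) : discrOfRoots c α = discrOfRoots c β := by
  -- the entries of `Vᵀ V` are power sums of the roots
  have hpowerSum (k : ℕ) : ∑ i, α i ^ k = ∑ i, β i ^ k := by
    have := congrArg (fun s => (s.map (· ^ k)).sum) h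
    simp only [Multiset.map_map] at this
    exact this
  rw [discrOfRoots, discrOfRoots, prod_prod_Ioi_sub_sq_eq_det, prod_prod_Ioi_sub_sq_eq_det]
  congr 2
  ext i j
  simp only [Matrix.vandermonde_transpose_mul_vandermonde, hpowerSum]

end Discriminant

theorem mul_mul_div_sub_div_moebius {K : Type*} [Field K] {a b c d x y : K}
    (hx : a - x * c ≠ 0) (hy : a - y * c ≠ 0) :
    (a - x * c) * (a - y * c) * ((x * d - b) / (a - x * c) - (y * d - b) / (a - y * c))
      = (a * d - b * c) * (x - y) := by
  rw [div_sub_div _ _ hx hy, mul_div_cancel₀ _ (mul_ne_zero hx hy)]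
  ring

theorem discrOfRoots_moebius {K : Type*} [Field K] {n : ℕ} (k : K) {a b c d : K}
    {α : Fin n → K} (hu : ∀ i, a - α i * c ≠ 0) :
    discrOfRoots (k * ∏ i, (a - α i * c)) (fun i => (α i * d - b) / (a - α i * c))
      = (a * d - b * c) ^ (n * (n - 1)) * discrOfRoots k α := by
  have hlead : (∏ i, (a - α i * c)) ^ (2 * n - 2)
      = ∏ i, ∏ j ∈ Ioi i, ((a - α i * c) * (a - α j * c)) ^ 2 := by
    rw [show 2 * n - 2 = (n - 1) * 2 by omega, pow_mul, ← Fin.prod_prod_Ioi_mul,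
      ← Finset.prod_pow]
    simp_rw [← Finset.prod_pow]
  rw [discrOfRoots, mul_pow, hlead, mul_assoc, ← prod_mul_distrib]
  simp_rw [← prod_mul_distrib, ← mul_pow, mul_mul_div_sub_div_moebius (hu _) (hu _), mul_pow,
    prod_mul_distrib, Fin.prod_prod_Ioi_pow_two, discrOfRoots]
  ring

theorem Polynomial.roots_prod_fin_X_sub_C {R : Type*} [CommRing R] [IsDomain R] {n : ℕ}
    (α : Fin n → R) : (∏ i, (X - C (α i))).roots = univ.val.map α := by
  rw [← roots_multiset_prod_X_sub_C (univ.val.map α), Multiset.map_map]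
  rfl

namespace MvPolynomial

noncomputable def linSubst {R : Type*} [CommSemiring R] (a b c d : R)
    (p : MvPolynomial (Fin 2) R) : MvPolynomial (Fin 2) R :=
  bind₁ ![C a * X 0 + C b * X 1, C c * X 0 + C d * X 1] p

theorem map_linSubst {R S : Type*} [CommSemiring R] [CommSemiring S] (φ : R →+* S)
    (a b c d : R) (p : MvPolynomial (Fin 2) R) :
    map φ (linSubst a b c d p) = linSubst (φ a) (φ b) (φ c) (φ d) (map φ p) := by
  rw [linSubst, linSubst, map_bind₁]
  congr 2
  funext i
  fin_cases i <;> simp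

theorem linSubst_C_mul_prod {R : Type*} [CommRing R] {n : ℕ} (a b c d k : R)
    (α : Fin n → R) :
    linSubst a b c d (C k * ∏ i, (X 0 - C (α i) * X 1))
      = C k * ∏ i, (C (a - α i * c) * X 0 - C (α i * d - b) * X 1) := by
  simp only [linSubst, map_mul, map_prod, map_sub, bind₁_C_right, bind₁_X_right,
    Matrix.cons_val_zero, Matrix.cons_val_one]
  congr 1
  exact prod_congr rfl fun i _ => by ring

variable {K : Type*} [Field K] {n : ℕ}

theorem prod_linear_eq_C_prod_mul_prod {u w : Fin n → K} (hu : ∀ i, u i ≠ 0) :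
    ∏ i, (C (u i) * X 0 - C (w i) * X 1 : MvPolynomial (Fin 2) K)
      = C (∏ i, u i) * ∏ i, (X 0 - C (w i / u i) * X 1) := by
  rw [map_prod, ← prod_mul_distrib]
  refine prod_congr rfl fun i _ => ?_
  rw [mul_sub, ← mul_assoc, ← C_mul, mul_div_cancel₀ _ (hu i)]

theorem roots_eq_of_C_mul_prod_eq {k : K} (hk : k ≠ 0) {α β : Fin n → K}
    (h : C k * ∏ i, (X 0 - C (α i) * X 1 : MvPolynomial (Fin 2) K)
      = C k * ∏ i, (X 0 - C (β i) * X 1)) :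
    univ.val.map α = univ.val.map β := by
  have hdehom := congrArg (aeval (R := K) ![Polynomial.X, (1 : Polynomial K)]) h
  simp only [map_mul, map_prod, map_sub, aeval_C, aeval_X, Matrix.cons_val_zero,
    Matrix.cons_val_one, Polynomial.algebraMap_eq, mul_one] at hdehom
  have hprod := mul_left_cancel₀ (Polynomial.C_ne_zero.mpr hk) hdehom
  rw [← Polynomial.roots_prod_fin_X_sub_C, hprod, Polynomial.roots_prod_fin_X_sub_C]

theorem discrOfRoots_eq_of_linSubst {k k' a b c d : K} (hk' : k' ≠ 0) {α β : Fin n → K}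
    (h : C k' * ∏ i, (X 0 - C (β i) * X 1)
      = linSubst a b c d (C k * ∏ i, (X 0 - C (α i) * X 1))) :
    discrOfRoots k' β = (a * d - b * c) ^ (n * (n - 1)) * discrOfRoots k α := by
  rw [linSubst_C_mul_prod] at h
  have hk'_eq : k' = k * ∏ i, (a - α i * c) := by
    simpa using congrArg (eval ![1, 0]) h
  have hu : ∀ i, a - α i * c ≠ 0 := fun i =>
    prod_ne_zero_iff.mp (right_ne_zero_of_mul (hk'_eq ▸ hk')) i (mem_univ i)
  rw [prod_linear_eq_C_prod_mul_prod hu, ← mul_assoc, ← C_mul, ← hk'_eq] at h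
  rw [discrOfRoots_congr_roots k' (roots_eq_of_C_mul_prod_eq hk' h), hk'_eq,
    discrOfRoots_moebius k hu]

end MvPolynomial

theorem Rat.den_pow_dvd_of_intCast_eq_pow_mul {q : ℚ} {n : ℕ} {D D' : ℤ}
    (h : (D' : ℚ) = q ^ n * D) : (q.den : ℤ) ^ n ∣ D := by
  have hclear : D' * (q.den : ℤ) ^ n = q.num ^ n * D := by
    qify
    rw [h, ← Rat.mul_den_eq_num]
    ring
  exact ((Rat.isCoprime_num_den q).symm.pow).dvd_of_dvd_mul_left ⟨D', by rw [← hclear]; ring⟩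

theorem Rat.den_eq_one_of_intCast_eq_pow_mul {q : ℚ} {n : ℕ} {D D' : ℤ} (hD : D ≠ 0)
    (hval : ∀ p : ℕ, p.Prime → padicValInt p D < n) (h : (D' : ℚ) = q ^ n * D) :
    q.den = 1 := by
  by_contra hden
  have hp := Nat.minFac_prime hden
  have := Fact.mk hp
  have hpow : ((q.den.minFac : ℕ) : ℤ) ^ n ∣ D :=
    (pow_dvd_pow_of_dvd (Int.natCast_dvd_natCast.mpr (Nat.minFac_dvd _)) n).trans
      (Rat.den_pow_dvd_of_intCast_eq_pow_mul h)
  have := hval _ hp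
  rcases (padicValInt_dvd_iff n D).mp hpow with hD0 | hle
  · exact hD hD0
  · omega

theorem abs_le_abs_of_intCast_eq_pow_mul {q : ℚ} {n : ℕ} {D D' : ℤ}
    (hval : ∀ p : ℕ, p.Prime → padicValInt p D < n) (hq : q ≠ 0)
    (h : (D' : ℚ) = q ^ n * D) : |D| ≤ |D'| := by
  rcases eq_or_ne D 0 with rfl | hD
  · simp
  have hq_int : (q.num : ℚ) = q := Rat.coe_int_num_of_den_eq_one
    (Rat.den_eq_one_of_intCast_eq_pow_mul hD hval h)
  have hD' : D' = q.num ^ n * D := by exact_mod_cast hq_int ▸ h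
  rw [hD', abs_mul, abs_pow]
  exact le_mul_of_one_le_left (abs_nonneg D)
    (one_le_pow₀ (Int.one_le_abs (Rat.num_ne_zero.mpr hq)))

theorem stmt11_general (f : MvPolynomial (Fin 2) ℤ)
    (c : ℂ) (α : Fin 6 → ℂ)
    (hf : MvPolynomial.map (Int.castRingHom ℂ) f
      = C c * ∏ i : Fin 6, (X 0 - C (α i) * X 1))
    (D : ℤ) (hD : (D : ℂ) = c ^ 10 * ∏ i : Fin 6, ∏ j ∈ Finset.Ioi i, (α i - α j) ^ 2)
    (hval : ∀ p : ℕ, p.Prime → padicValInt p D < 30)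
    (a b c' d : ℚ) (hdet : a * d - b * c' ≠ 0)
    (g : MvPolynomial (Fin 2) ℤ)
    (hg : MvPolynomial.map (Int.castRingHom ℚ) g
      = bind₁ ![C a * X 0 + C b * X 1, C c' * X 0 + C d * X 1]
          (MvPolynomial.map (Int.castRingHom ℚ) f))
    (c₂ : ℂ) (hc₂ : c₂ ≠ 0) (β : Fin 6 → ℂ)
    (hgC : MvPolynomial.map (Int.castRingHom ℂ) g
      = C c₂ * ∏ i : Fin 6, (X 0 - C (β i) * X 1))
    (D' : ℤ)
    (hD' : (D' : ℂ) = c₂ ^ 10 * ∏ i : Fin 6, ∏ j ∈ Finset.Ioi i, (β i - β j) ^ 2) :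
    |D| ≤ |D'| := by
  have hcast : (Rat.castHom ℂ).comp (Int.castRingHom ℚ) = Int.castRingHom ℂ :=
    RingHom.ext_int _ _
  have hgℂ : map (Int.castRingHom ℚ) g = linSubst a b c' d (map (Int.castRingHom ℚ) f) := hg
  replace hgℂ := congrArg (map (Rat.castHom ℂ)) hgℂ
  rw [map_linSubst, MvPolynomial.map_map, MvPolynomial.map_map, hcast, hf, hgC] at hgℂ
  have hdiscr : (D' : ℂ) = ((a * d - b * c' : ℚ) : ℂ) ^ 30 * D := by
    rw [hD', hD]
    push_cast
    exact discrOfRoots_eq_of_linSubst hc₂ hgℂ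
  exact abs_le_abs_of_intCast_eq_pow_mul hval hdet (by exact_mod_cast hdiscr)

/-- Let `f(x,z) ∈ ℤ[x,z]` be a binary sextic with nonzero `x⁶`-coefficient
(over `ℂ`, `f = c ∏ (x - α_i z)` with `c ≠ 0`), with discriminant
`Δ(f) = D = c^{10} ∏_{i<j}(α_i - α_j)² ∈ ℤ`, `D ≠ 0`, and `v_p(D) < 30` for every prime `p`.
Then for every `M = [[a,b],[c',d]] ∈ GL₂(ℚ)` such that `f^M` has integer coefficients
(say `f^M = g` with `g ∈ ℤ[x,z]`) and nonzero `x⁶`-coefficient, the discriminant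
`D' = Δ(f^M)` satisfies `|D'| ≥ |D|`. -/
theorem stmt11 (f : MvPolynomial (Fin 2) ℤ)
    (c : ℂ) (hc : c ≠ 0) (α : Fin 6 → ℂ)
    (hf : MvPolynomial.map (Int.castRingHom ℂ) f
      = C c * ∏ i : Fin 6, (X 0 - C (α i) * X 1))
    (D : ℤ) (hD : (D : ℂ) = c ^ 10 * ∏ i : Fin 6, ∏ j ∈ Finset.Ioi i, (α i - α j) ^ 2)
    (hD0 : D ≠ 0)
    (hval : ∀ p : ℕ, p.Prime → padicValInt p D < 30)
    (a b c' d : ℚ) (hdet : a * d - b * c' ≠ 0)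
    (g : MvPolynomial (Fin 2) ℤ)
    (hg : MvPolynomial.map (Int.castRingHom ℚ) g
      = bind₁ ![C a * X 0 + C b * X 1, C c' * X 0 + C d * X 1]
          (MvPolynomial.map (Int.castRingHom ℚ) f))
    (c₂ : ℂ) (hc₂ : c₂ ≠ 0) (β : Fin 6 → ℂ)
    (hgC : MvPolynomial.map (Int.castRingHom ℂ) g
      = C c₂ * ∏ i : Fin 6, (X 0 - C (β i) * X 1))
    (D' : ℤ)
    (hD' : (D' : ℂ) = c₂ ^ 10 * ∏ i : Fin 6, ∏ j ∈ Finset.Ioi i, (β i - β j) ^ 2) :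
    |D| ≤ |D'| :=
  stmt11_general f c α hf D hD hval a b c' d hdet g hg c₂ hc₂ β hgC D' hD'
end

section
/- Let g(t) ∈ ℤ[t] be a quadratic polynomial with nonzero leading coefficient, let f(x) = g(x³) ∈ ℤ[x] (a degree-6 polynomial, corresponding to a genus 2 curve y² = g(x³) with an extra automorphism of order 3), and suppose Δ(f) ≠ 0 and that for every prime p the p-adic valuation satisfies v_p(Δ(f)) < 10. Then for every nonzero u ∈ ℚ such that the polynomial h(x) := u²·g(x³/u) has integer coefficients, one has |Δ(h)| ≥ |Δ(f)|. -/
/-! If `w³ = u`, then `h(w x) = u² f(x)`, so the roots of `h` are the `w αᵢ` and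
`Δ(h) = w³⁰ Δ(f) = u¹⁰ Δ(f)`. Writing `u = a / b` in lowest terms, `b¹⁰` divides `a¹⁰ Δ(f)`,
hence `Δ(f)`; as no prime occurs to the tenth power in `Δ(f)`, `b = 1`. So `u` is a nonzero
integer and `|Δ(h)| = |u|¹⁰ |Δ(f)| ≥ |Δ(f)|`. -/

open Polynomial Finset

section RootDiscr

variable {R : Type*} [CommRing R] {n : ℕ}

def rootDiscr (γ : Fin n → R) : R :=
  ∏ i, ∏ j ∈ Ioi i, (γ i - γ j) ^ 2

theorem Fin.sum_card_Ioi (n : ℕ) : ∑ i : Fin n, #(Ioi i) = n.choose 2 := by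
  simp only [Fin.card_Ioi]
  rw [Fin.sum_univ_eq_sum_range (fun i => n - 1 - i), sum_range_reflect (fun i => i) n,
    sum_range_id, Nat.choose_two_right]

theorem prod_prod_compl_sub_eq_neg_one_pow_mul_rootDiscr (γ : Fin n → R) :
    ∏ i, ∏ j ∈ ({i}ᶜ : Finset (Fin n)), (γ i - γ j) = (-1) ^ n.choose 2 * rootDiscr γ := by
  rw [← Fin.sum_card_Ioi, rootDiscr, ← prod_pow_eq_pow_sum, ← prod_mul_distrib,
    ← prod_prod_Ioi_mul_eq_prod_prod_off_diag (fun j i => γ i - γ j)]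
  refine prod_congr rfl fun i _ => ?_
  rw [← prod_const, ← prod_mul_distrib]
  exact prod_congr rfl fun j _ => by ring

theorem rootDiscr_const_mul (c : R) (γ : Fin n → R) :
    rootDiscr (fun i => c * γ i) = (c ^ 2) ^ n.choose 2 * rootDiscr γ := by
  rw [← Fin.sum_card_Ioi, rootDiscr, rootDiscr, ← prod_pow_eq_pow_sum, ← prod_mul_distrib]
  refine prod_congr rfl fun i _ => ?_
  rw [← prod_const, ← prod_mul_distrib]
  exact prod_congr rfl fun j _ => by ring

theorem prod_prod_compl_sub_eq_prod_eval_derivative (γ : Fin n → R) :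
    ∏ i, ∏ j ∈ ({i}ᶜ : Finset (Fin n)), (γ i - γ j) =
      ((univ.val.map γ).map fun r =>
        (derivative ((univ.val.map γ).map fun a => X - C a).prod).eval r).prod := by
  classical
  rw [Multiset.map_map, ← prod_map_val]
  refine prod_congr rfl fun i _ => ?_
  rw [Function.comp_apply,
    eval_multiset_prod_X_sub_C_derivative (Multiset.mem_map_of_mem γ (mem_univ i)),
    ← Multiset.map_erase_of_mem γ _ (mem_univ i), Multiset.map_map, ← erase_val, prod_map_val,
    compl_singleton]
  rfl

theorem univ_map_eq_of_prod_X_sub_C_eq [IsDomain R] {γ δ : Fin n → R}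
    (h : ∏ i, (X - C (γ i)) = ∏ i, (X - C (δ i))) : univ.val.map γ = univ.val.map δ := by
  have hroots (ε : Fin n → R) : (∏ i, (X - C (ε i))).roots = univ.val.map ε := by
    rw [prod_eq_multiset_prod, ← roots_multiset_prod_X_sub_C (univ.val.map ε), Multiset.map_map]
    rfl
  rw [← hroots, h, hroots]

theorem rootDiscr_eq_of_prod_X_sub_C_eq [IsDomain R] {γ δ : Fin n → R}
    (h : ∏ i, (X - C (γ i)) = ∏ i, (X - C (δ i))) : rootDiscr γ = rootDiscr δ := by
  -- up to the sign `(-1) ^ n.choose 2`, both sides are `∏ P'(r)` over the roots `r` of the common `P = ∏ (X - C _)`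
  have hcompl := prod_prod_compl_sub_eq_prod_eval_derivative γ
  rw [univ_map_eq_of_prod_X_sub_C_eq h, ← prod_prod_compl_sub_eq_prod_eval_derivative,
    prod_prod_compl_sub_eq_neg_one_pow_mul_rootDiscr,
    prod_prod_compl_sub_eq_neg_one_pow_mul_rootDiscr] at hcompl
  exact (isUnit_neg_one.pow _).mul_left_cancel hcompl

end RootDiscr

theorem Polynomial.prod_X_sub_C_comp_C_mul_X {K : Type*} [Field K] {n : ℕ} (γ : Fin n → K)
    {w : K} (hw : w ≠ 0) :
    (∏ i, (X - C (γ i))).comp (C w * X) = C (w ^ n) * ∏ i, (X - C (γ i / w)) := by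
  have hfactor (z : K) : C w * X - C z = C w * (X - C (z / w)) := by
    rw [mul_sub, ← C_mul, mul_div_cancel₀ z hw]
  simp only [prod_comp, sub_comp, X_comp, C_comp, hfactor, prod_mul_distrib, prod_const,
    card_univ, Fintype.card_fin, C_pow]

theorem Polynomial.comp_C_mul_X_of_pow_three_eq {R : Type*} [CommRing R] (a₂ a₁ a₀ : R)
    {u w : R} (hw : w ^ 3 = u) :
    (C a₂ * X ^ 6 + C (a₁ * u) * X ^ 3 + C (a₀ * u ^ 2)).comp (C w * X) =
      C (u ^ 2) * (C a₂ * X ^ 6 + C a₁ * X ^ 3 + C a₀) := by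
  subst hw
  simp only [add_comp, mul_comp, C_comp, pow_comp, X_comp, C_mul, C_pow]
  ring

theorem Polynomial.map_comp_X_pow_of_natDegree_le_two {R S : Type*} [CommSemiring R]
    [CommSemiring S] (φ : R →+* S) {g : R[X]} (hg : g.natDegree ≤ 2) (k : ℕ) :
    (g.comp (X ^ k)).map φ =
      C (φ (g.coeff 2)) * X ^ (2 * k) + C (φ (g.coeff 1)) * X ^ k + C (φ (g.coeff 0)) := by
  have hexpand : g = C (g.coeff 2) * X ^ 2 + C (g.coeff 1) * X + C (g.coeff 0) := by
    conv_lhs => rw [g.as_sum_range_C_mul_X_pow' (Nat.lt_succ_of_le hg)]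
    simp only [sum_range_succ, sum_range_zero, pow_zero, pow_one, mul_one, zero_add]
    ring
  conv_lhs => rw [hexpand]
  simp only [add_comp, mul_comp, C_comp, pow_comp, X_comp, Polynomial.map_add,
    Polynomial.map_mul, Polynomial.map_pow, map_C, map_X]
  ring

theorem rootDiscr_eq_pow_ten_mul_of_twist {K : Type*} [Field K] [IsAlgClosed K]
    {c a₁ a₀ u : K} (hc : c ≠ 0) (hu : u ≠ 0) {α β : Fin 6 → K}
    (hα : C c * ∏ i, (X - C (α i)) = C c * X ^ 6 + C a₁ * X ^ 3 + C a₀)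
    (hβ : C c * ∏ i, (X - C (β i)) = C c * X ^ 6 + C (a₁ * u) * X ^ 3 + C (a₀ * u ^ 2)) :
    rootDiscr β = u ^ 10 * rootDiscr α := by
  obtain ⟨w, hw⟩ := IsAlgClosed.exists_pow_nat_eq u three_pos
  have hw0 : w ≠ 0 := ne_zero_pow three_ne_zero (hw ▸ hu)
  have hscaled : ∏ i, (X - C (β i / w)) = ∏ i, (X - C (α i)) := by
    have h := congrArg (·.comp (C w * X)) hβ
    simp only [comp_C_mul_X_of_pow_three_eq _ _ _ hw, ← hα, mul_comp, C_comp,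
      prod_X_sub_C_comp_C_mul_X _ hw0] at h
    have hw6 : w ^ 6 = u ^ 2 := by rw [← hw]; ring
    rw [hw6] at h
    refine mul_left_cancel₀ (C_ne_zero.2 (mul_ne_zero hc (pow_ne_zero 2 hu))) ?_
    rw [C_mul]
    linear_combination h
  calc rootDiscr β = rootDiscr (fun i => w * (β i / w)) := by simp_rw [mul_div_cancel₀ _ hw0]
    _ = (w ^ 2) ^ 15 * rootDiscr (fun i => β i / w) := rootDiscr_const_mul _ _
    _ = u ^ 10 * rootDiscr α := by
      rw [rootDiscr_eq_of_prod_X_sub_C_eq hscaled, ← hw]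
      ring

theorem Nat.eq_one_of_pow_dvd_of_padicValInt_lt {n d : ℕ} {D : ℤ} (hD : D ≠ 0)
    (hval : ∀ p : ℕ, p.Prime → padicValInt p D < n) (hdvd : (d : ℤ) ^ n ∣ D) : d = 1 := by
  by_contra hd
  have hp := Nat.minFac_prime hd
  have hpD : ((d.minFac : ℕ) : ℤ) ^ n ∣ D :=
    (pow_dvd_pow_of_dvd (Int.natCast_dvd_natCast.2 d.minFac_dvd) n).trans hdvd
  rcases (padicValInt_dvd_iff_of_ne_one hp.ne_one n D).1 hpD with h | h
  · exact hD h
  · exact (hval _ hp).not_ge h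

theorem Int.abs_le_abs_of_cast_eq_pow_mul {n : ℕ} {u : ℚ} (hu : u ≠ 0) {D D' : ℤ}
    (hval : ∀ p : ℕ, p.Prime → padicValInt p D < n) (h : (D' : ℚ) = u ^ n * D) :
    |D| ≤ |D'| := by
  rcases eq_or_ne D 0 with rfl | hD
  · simp
  have hnum : D' * (u.den : ℤ) ^ n = u.num ^ n * D := by
    rw [← Rat.num_div_den u, div_pow] at h
    field_simp at h
    exact_mod_cast h
  have hden : u.den = 1 := Nat.eq_one_of_pow_dvd_of_padicValInt_lt hD hval <|
    (u.isCoprime_num_den.symm.pow).dvd_of_dvd_mul_left ⟨D', by rw [← hnum, mul_comm]⟩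
  rw [hden, Nat.cast_one, one_pow, mul_one] at hnum
  rw [hnum, abs_mul, abs_pow]
  exact le_mul_of_one_le_left (abs_nonneg D)
    (one_le_pow₀ (Int.one_le_abs (Rat.num_ne_zero.2 hu)))

theorem stmt13_general (g : Polynomial ℤ) (hg2 : g.natDegree = 2)
    (f : Polynomial ℤ) (hf : f = g.comp (X ^ 3))
    (α : Fin 6 → ℂ)
    (hroots : f.map (Int.castRingHom ℂ)
      = C ((g.coeff 2 : ℂ)) * ∏ i : Fin 6, (X - C (α i)))
    (D : ℤ)
    (hD : (D : ℂ) = (g.coeff 2 : ℂ) ^ 10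
      * ∏ i : Fin 6, ∏ j ∈ Finset.Ioi i, (α i - α j) ^ 2)
    (hval : ∀ p : ℕ, p.Prime → padicValInt p D < 10)
    (u : ℚ) (hu : u ≠ 0)
    (H : Polynomial ℤ)
    (hH : H.map (Int.castRingHom ℚ)
      = C ((g.coeff 2 : ℚ)) * X ^ 6 + C ((g.coeff 1 : ℚ) * u) * X ^ 3
        + C ((g.coeff 0 : ℚ) * u ^ 2))
    (β : Fin 6 → ℂ)
    (hβ : H.map (Int.castRingHom ℂ)
      = C ((g.coeff 2 : ℂ)) * ∏ i : Fin 6, (X - C (β i)))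
    (D' : ℤ)
    (hD' : (D' : ℂ) = (g.coeff 2 : ℂ) ^ 10
      * ∏ i : Fin 6, ∏ j ∈ Finset.Ioi i, (β i - β j) ^ 2) :
    |D| ≤ |D'| := by
  have hc : (g.coeff 2 : ℂ) ≠ 0 := by
    have hlc := leadingCoeff_ne_zero.2 (ne_zero_of_natDegree_gt (hg2 ▸ two_pos))
    rw [leadingCoeff, hg2] at hlc
    exact_mod_cast hlc
  have hfC : f.map (Int.castRingHom ℂ) =
      C (g.coeff 2 : ℂ) * X ^ 6 + C (g.coeff 1 : ℂ) * X ^ 3 + C (g.coeff 0 : ℂ) := by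
    rw [hf, map_comp_X_pow_of_natDegree_le_two _ hg2.le]
    rfl
  have hHC : H.map (Int.castRingHom ℂ) = C (g.coeff 2 : ℂ) * X ^ 6
      + C ((g.coeff 1 : ℂ) * u) * X ^ 3 + C ((g.coeff 0 : ℂ) * u ^ 2) := by
    rw [← RingHom.ext_int ((algebraMap ℚ ℂ).comp (Int.castRingHom ℚ)) (Int.castRingHom ℂ),
      ← Polynomial.map_map, hH]
    simp only [Polynomial.map_add, Polynomial.map_mul, Polynomial.map_pow, map_C, map_X, map_mul,
      map_pow, eq_ratCast, Rat.cast_intCast]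
  have hdisc := rootDiscr_eq_pow_ten_mul_of_twist hc (Rat.cast_ne_zero.2 hu)
    (hroots.symm.trans hfC) (hβ.symm.trans hHC)
  have hQ : (D' : ℚ) = u ^ 10 * D := by
    have hC : (D' : ℂ) = (u : ℂ) ^ 10 * D := by
      change _ = _ * rootDiscr β at hD'
      change _ = _ * rootDiscr α at hD
      rw [hD', hD, hdisc]
      ring
    exact_mod_cast hC
  exact Int.abs_le_abs_of_cast_eq_pow_mul hu hval hQ

/-- Let `g ∈ ℤ[t]` be a quadratic with nonzero leading coefficient and
`f(x) = g(x³)`, with discriminant `Δ(f) = D = c^{10} ∏_{i<j}(α_i - α_j)² ∈ ℤ` (where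
`c = g.coeff 2` is the leading coefficient and `α_i` the complex roots of `f`), `D ≠ 0`,
and `v_p(D) < 10` for every prime `p`.  Then for every nonzero `u ∈ ℚ` such that
`h(x) = u²·g(x³/u) = a₂x⁶ + a₁u x³ + a₀u²` has integer coefficients (say `h = H` with
`H ∈ ℤ[x]`), the discriminant `D' = Δ(h)` satisfies `|D'| ≥ |D|`. -/
theorem stmt13 (g : Polynomial ℤ) (hg2 : g.natDegree = 2) (hlc : g.coeff 2 ≠ 0)
    (f : Polynomial ℤ) (hf : f = g.comp (X ^ 3))
    (α : Fin 6 → ℂ)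
    (hroots : f.map (Int.castRingHom ℂ)
      = C ((g.coeff 2 : ℂ)) * ∏ i : Fin 6, (X - C (α i)))
    (D : ℤ)
    (hD : (D : ℂ) = (g.coeff 2 : ℂ) ^ 10
      * ∏ i : Fin 6, ∏ j ∈ Finset.Ioi i, (α i - α j) ^ 2)
    (hD0 : D ≠ 0)
    (hval : ∀ p : ℕ, p.Prime → padicValInt p D < 10)
    (u : ℚ) (hu : u ≠ 0)
    (H : Polynomial ℤ)
    (hH : H.map (Int.castRingHom ℚ)
      = C ((g.coeff 2 : ℚ)) * X ^ 6 + C ((g.coeff 1 : ℚ) * u) * X ^ 3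
        + C ((g.coeff 0 : ℚ) * u ^ 2))
    (β : Fin 6 → ℂ)
    (hβ : H.map (Int.castRingHom ℂ)
      = C ((g.coeff 2 : ℂ)) * ∏ i : Fin 6, (X - C (β i)))
    (D' : ℤ)
    (hD' : (D' : ℂ) = (g.coeff 2 : ℂ) ^ 10
      * ∏ i : Fin 6, ∏ j ∈ Finset.Ioi i, (β i - β j) ^ 2) :
    |D| ≤ |D'| :=
  stmt13_general g hg2 f hf α hroots D hD hval u hu H hH β hβ D' hD'
end
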